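/- Fix k with 0 ≤ k ≤ n (with the conventions z_0 = −∞ and z_{n+1} = +∞) and let x ∈ ℝ satisfy z_k < x < z_{k+1}. Then the limit of g(z) as z → x with z ∈ ℍ exists and equals (∏_{j=1}^n |x − z_j|^{−β_j}) · exp(−iπ·∑_{j=k+1}^n β_j). In particular, the argument of the boundary value of g is constant on each interval (z_k, z_{k+1}) of the real axis, which is the statement that the Schwarz–Christoffel map SC (a primitive of g) maps each interval [z_k, z_{k+1}] onto a straight line segment. -/

import Mathlib

/-!
Each factor `exp (-β * Log (w - t))` has a limit at a real point `x ≠ t` from the upper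
half-plane: for `t < x` the point `x - t` lies in the slit plane where `Log` is continuous,
while for `x < t` the point `x - t` lies on the negative real axis, approached from above,
where `Log` tends to `log |x - t| + iπ`. Every `z_j` to the right of `x` thus contributes
the phase `exp (-iπ β_j)`, and the limit of the product is the product of the limits.
-/

open Complex Filter Topology
open scoped Real

namespace Complex

lemma tendsto_log_sub_ofReal_nhdsWithin_im_pos {t x : ℝ} (h : t ≠ x) :
    Tendsto (fun w : ℂ => log (w - t)) (𝓝[{w | 0 < w.im}] (x : ℂ))
      (𝓝 (Real.log |x - t| + if x < t then π * I else 0)) := by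
  have hsub : Tendsto (fun w : ℂ => w - t) (𝓝 (x : ℂ)) (𝓝 ((x - t : ℝ) : ℂ)) := by
    simpa using (continuous_sub_right (t : ℂ)).tendsto (x : ℂ)
  rcases h.lt_or_gt with htx | hxt
  · have hslit : ((x - t : ℝ) : ℂ) ∈ slitPlane := ofReal_mem_slitPlane.2 (by linarith)
    have hlog := (continuousAt_clog hslit).tendsto.comp
      (hsub.mono_left (nhdsWithin_le_nhds (s := {w | 0 < w.im})))
    rwa [abs_of_pos (sub_pos.2 htx), ofReal_log (sub_pos.2 htx).le, if_neg htx.not_gt,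
      add_zero]
  · have hsub' : Tendsto (fun w : ℂ => w - t) (𝓝[{w | 0 < w.im}] (x : ℂ))
        (𝓝[{w | 0 ≤ w.im}] ((x - t : ℝ) : ℂ)) := by
      refine tendsto_nhdsWithin_of_tendsto_nhds_of_eventually_within _
        (hsub.mono_left nhdsWithin_le_nhds) ?_
      filter_upwards [self_mem_nhdsWithin] with w hw
      simpa using hw.le
    have hlog := (tendsto_log_nhdsWithin_im_nonneg_of_re_neg_of_im_zero
      (by simpa using sub_neg.2 hxt) (ofReal_im _)).comp hsub'
    rw [if_pos hxt]
    rwa [norm_real, Real.norm_eq_abs] at hlog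

lemma tendsto_exp_neg_mul_log_sub_ofReal_nhdsWithin_im_pos {t x : ℝ} (h : t ≠ x) (b : ℝ) :
    Tendsto (fun w : ℂ => exp (-b * log (w - t))) (𝓝[{w | 0 < w.im}] (x : ℂ))
      (𝓝 (((|x - t| ^ (-b) : ℝ) : ℂ) * exp (-π * I * if x < t then (b : ℂ) else 0))) := by
  have hlim := (continuous_exp.tendsto _).comp
    ((tendsto_const_nhds (x := -(b : ℂ))).mul (tendsto_log_sub_ofReal_nhdsWithin_im_pos h))
  have hpos : 0 < |x - t| := abs_pos.2 (sub_ne_zero.2 h.symm)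
  have hval : exp (-b * (Real.log |x - t| + if x < t then π * I else 0)) =
      ((|x - t| ^ (-b) : ℝ) : ℂ) * exp (-π * I * if x < t then (b : ℂ) else 0) := by
    rw [Real.rpow_def_of_pos hpos, ofReal_exp, ← exp_add]
    push_cast
    split_ifs <;> ring_nf
  rwa [hval] at hlim

end Complex

theorem schwarz_christoffel_boundary_limit_general
    (n : ℕ) (z : Fin n → ℝ) (β : Fin n → ℝ)
    (g : ℂ → ℂ)
    (hg : ∀ w : ℂ, g w =
      ∏ j : Fin n, Complex.exp (-(β j : ℂ) * Complex.log (w - (z j : ℂ))))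
    (k : ℕ) (x : ℝ)
    (hx₁ : ∀ j : Fin n, (j : ℕ) < k → z j < x)
    (hx₂ : ∀ j : Fin n, k ≤ (j : ℕ) → x < z j) :
    Tendsto g (nhdsWithin (x : ℂ) {w : ℂ | 0 < w.im})
      (nhds (((∏ j : Fin n, |x - z j| ^ (-(β j)) : ℝ) : ℂ) *
        Complex.exp (-(Real.pi : ℂ) * Complex.I *
          ∑ j ∈ Finset.univ.filter (fun j : Fin n => k ≤ (j : ℕ)), (β j : ℂ)))) := by
  have hright : ∀ j : Fin n, x < z j ↔ k ≤ (j : ℕ) := fun j =>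
    ⟨fun hxz => not_lt.1 fun hjk => (hx₁ j hjk).not_gt hxz, hx₂ j⟩
  have hne : ∀ j : Fin n, z j ≠ x := fun j => by
    rcases lt_or_ge (j : ℕ) k with hjk | hkj
    exacts [(hx₁ j hjk).ne, (hx₂ j hkj).ne']
  have hlim := tendsto_finsetProd Finset.univ fun j _ =>
    tendsto_exp_neg_mul_log_sub_ofReal_nhdsWithin_im_pos (hne j) (β j)
  rw [funext hg]
  convert hlim using 2
  simp only [Finset.prod_mul_distrib, ← exp_sum, ← Finset.mul_sum, ofReal_prod, hright]
  rw [Finset.sum_filter]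

/-- Boundary values of the Schwarz–Christoffel integrand: for `x` in the real interval
`(z_k, z_{k+1})` (conventions `z_0 = −∞`, `z_{n+1} = +∞`; here `k` counts how many of
the `z_j` lie to the left of `x`), the limit of `g(z) = ∏ⱼ exp(−βⱼ · Log(z − zⱼ))`
as `z → x` within the upper half-plane exists and equals
`(∏ⱼ |x − zⱼ|^{−βⱼ}) · exp(−iπ·∑_{j > k} βⱼ)`.  In particular the argument of the
boundary value is constant on each interval, so `SC` maps it onto a line segment. -/
theorem schwarz_christoffel_boundary_limit
    (n : ℕ) (hn : 1 ≤ n) (z : Fin n → ℝ) (hz : StrictMono z) (β : Fin n → ℝ)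
    (g : ℂ → ℂ)
    (hg : ∀ w : ℂ, g w =
      ∏ j : Fin n, Complex.exp (-(β j : ℂ) * Complex.log (w - (z j : ℂ))))
    (k : ℕ) (hk : k ≤ n) (x : ℝ)
    (hx₁ : ∀ j : Fin n, (j : ℕ) < k → z j < x)
    (hx₂ : ∀ j : Fin n, k ≤ (j : ℕ) → x < z j) :
    Tendsto g (nhdsWithin (x : ℂ) {w : ℂ | 0 < w.im})
      (nhds (((∏ j : Fin n, |x - z j| ^ (-(β j)) : ℝ) : ℂ) *
        Complex.exp (-(Real.pi : ℂ) * Complex.I *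
          ∑ j ∈ Finset.univ.filter (fun j : Fin n => k ≤ (j : ℕ)), (β j : ℂ)))) :=
  schwarz_christoffel_boundary_limit_general n z β g hg k x hx₁ hx₂
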